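/- arXiv:2208.05261 — 3 statements merged into one kernel-verified Lean document; each statement's English description precedes it below -/
import Mathlib

section
/- The quantity C_{P,2̄,n} satisfies: C_{P,2̄,1} = 1, C_{P,2̄,2} = 2, C_{P,2̄,3} = 3, and for every n > 3, C_{P,2̄,n} = C_{P,2̄,n−1} + C_{P,2,n−2} + C_{P,n−3}. -/
/-!
A minimal Roman dominating function is characterised locally: a vertex valued `0` has a
neighbour valued `2`, a vertex valued `1` has none, and a vertex valued `2` has a neighbour
valued `0` that is adjacent to no other `2`. On a path these are conditions on five consecutive
values. Hence a minimal rdf of `Pₙ` with `f(v₁) ≠ 2` starts either with `1`, followed by a minimal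
rdf of `Pₙ₋₁` with first value `≠ 2`; or with `0 2`, followed by a minimal rdf of `Pₙ₋₂` with
first value `2`; or with `0 2 0`, followed by any minimal rdf of `Pₙ₋₃`.
-/

/-- A Roman dominating function: every vertex with value 0 has a neighbor with value 2. -/
def IsRDF {V : Type*} (G : SimpleGraph V) (f : V → Fin 3) : Prop :=
  ∀ v, f v = 0 → ∃ u, G.Adj v u ∧ f u = 2

/-- A minimal Roman dominating function: an rdf such that no rdf `g ≠ f` satisfies `g ≤ f`. -/
def IsMinimalRDF {V : Type*} (G : SimpleGraph V) (f : V → Fin 3) : Prop :=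
  IsRDF G f ∧ ∀ g : V → Fin 3, IsRDF G g → g ≤ f → g = f

/-- The number of minimal Roman dominating functions of `G`. -/
noncomputable def numMinRDF {V : Type*} (G : SimpleGraph V) : ℕ :=
  {f : V → Fin 3 | IsMinimalRDF G f}.ncard

/-- `C_{P,n}`: the number of minimal Roman dominating functions of the path `Pₙ`. -/
noncomputable def CP (n : ℕ) : ℕ := numMinRDF (SimpleGraph.pathGraph n)

/-- `C_{P,2,n}`: the number of minimal rdf `f` of `Pₙ` with `f(v₁) = 2`. -/
noncomputable def CP2 (n : ℕ) : ℕ :=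
  {f : Fin n → Fin 3 | IsMinimalRDF (SimpleGraph.pathGraph n) f ∧
    ∃ h : 0 < n, f ⟨0, h⟩ = 2}.ncard

/-- `C_{P,2̄,n}`: the number of minimal rdf `f` of `Pₙ` with `f(v₁) ≠ 2`. -/
noncomputable def CPbar2 (n : ℕ) : ℕ :=
  {f : Fin n → Fin 3 | IsMinimalRDF (SimpleGraph.pathGraph n) f ∧
    ∀ h : 0 < n, f ⟨0, h⟩ ≠ 2}.ncard


open SimpleGraph Function

section General

variable {V : Type*} {G : SimpleGraph V} {f : V → Fin 3}

theorem IsRDF.update_zero [DecidableEq V] (hf : IsRDF G f) {v u : V} (hv : f v ≠ 2)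
    (hvu : G.Adj v u) (hu : f u = 2) : IsRDF G (update f v 0) := by
  intro w hw
  by_cases hwv : w = v
  · subst hwv
    exact ⟨u, hvu, by rwa [update_of_ne hvu.ne']⟩
  · obtain ⟨x, hwx, hx⟩ := hf w (by rwa [update_of_ne hwv] at hw)
    exact ⟨x, hwx, by rwa [update_of_ne (by rintro rfl; exact hv hx)]⟩

theorem IsRDF.update_one [DecidableEq V] (hf : IsRDF G f) {v : V}
    (hv : ∀ u, G.Adj v u → f u = 0 → ∃ w, G.Adj u w ∧ w ≠ v ∧ f w = 2) :
    IsRDF G (update f v 1) := by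
  intro w hw
  have hwv : w ≠ v := by rintro rfl; simp at hw
  rw [update_of_ne hwv] at hw
  obtain ⟨u, hwu, hu⟩ := hf w hw
  by_cases huv : u = v
  · subst huv
    obtain ⟨x, hwx, hxu, hx⟩ := hv w hwu.symm hw
    exact ⟨x, hwx, by rwa [update_of_ne hxu]⟩
  · exact ⟨u, hwu, by rwa [update_of_ne huv]⟩

theorem IsMinimalRDF.eq_of_isRDF_update [DecidableEq V] (hf : IsMinimalRDF G f) {v : V}
    {c : Fin 3} (hc : c ≤ f v) (hg : IsRDF G (update f v c)) : c = f v := by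
  simpa using congrFun (hf.2 _ hg (update_le_iff.2 ⟨hc, fun _ _ => le_rfl⟩)) v

theorem isMinimalRDF_iff : IsMinimalRDF G f ↔ ∀ v,
    (f v = 0 → ∃ u, G.Adj v u ∧ f u = 2) ∧
    (f v = 1 → ∀ u, G.Adj v u → f u ≠ 2) ∧
    (f v = 2 → ∃ u, G.Adj v u ∧ f u = 0 ∧ ∀ w, G.Adj u w → w ≠ v → f w ≠ 2) := by
  classical
  constructor
  · intro hf v
    refine ⟨hf.1 v, fun hv u hvu hu => ?_, fun hv => ?_⟩
    · have := hf.eq_of_isRDF_update (by simp [hv]) (hf.1.update_zero (by simp [hv]) hvu hu)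
      simp [hv] at this
    · by_contra! h
      have := hf.eq_of_isRDF_update (by simp [hv]) (hf.1.update_one h)
      simp [hv] at this
  · intro h
    refine ⟨fun v => (h v).1, fun g hg hle => funext fun v => ?_⟩
    by_contra hne
    have hlt : g v < f v := lt_of_le_of_ne (hle v) hne
    obtain hv | hv : f v = 1 ∨ f v = 2 := by omega
    · obtain ⟨u, hvu, hu⟩ := hg v (by omega)
      exact (h v).2.1 hv u hvu (by have : g u ≤ f u := hle u; omega)
    · obtain ⟨u, hvu, hu, hpriv⟩ := (h v).2.2 hv
      obtain ⟨w, huw, hw⟩ := hg u (by have : g u ≤ f u := hle u; omega)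
      have hwv : w = v := by
        by_contra hwv
        exact hpriv w huw hwv (by have : g w ≤ f w := hle w; omega)
      subst hwv
      omega

end General

/-- Values of `f` along `ℤ`, with `3` off the path: `3` is neither `0` nor `2`, so a missing
neighbour neither dominates nor needs domination. -/
def pad {n : ℕ} (f : Fin n → Fin 3) (i : ℤ) : ℕ :=
  if h : 0 ≤ i ∧ i < n then f ⟨i.toNat, by omega⟩ else 3

/-- The conditions of `isMinimalRDF_iff` at position `i` of a path: `i ∓ 2` is the other
neighbour of `i ∓ 1`. -/
def PathMinimalAt (F : ℤ → ℕ) (i : ℤ) : Prop :=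
  (F i = 0 → F (i - 1) = 2 ∨ F (i + 1) = 2) ∧
  (F i = 1 → F (i - 1) ≠ 2 ∧ F (i + 1) ≠ 2) ∧
  (F i = 2 → F (i - 1) = 0 ∧ F (i - 2) ≠ 2 ∨ F (i + 1) = 0 ∧ F (i + 2) ≠ 2)

def PathMinimal (F : ℤ → ℕ) : Prop := ∀ i, PathMinimalAt F i

section Pad

variable {n : ℕ} (f : Fin n → Fin 3)

theorem pad_coe (v : Fin n) : pad f v = f v := by
  simp [pad]

theorem pad_coe_eq_iff (v : Fin n) (c : Fin 3) : pad f v = c ↔ f v = c := by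
  rw [pad_coe, Fin.val_inj]

theorem pad_eq_three {i : ℤ} (hi : ¬(0 ≤ i ∧ i < n)) : pad f i = 3 := by
  simp [pad, hi]

theorem pad_of_neg {i : ℤ} (hi : i < 0) : pad f i = 3 :=
  pad_eq_three f (by omega)

theorem mem_range_of_pad_lt_three {i : ℤ} (hi : pad f i < 3) : 0 ≤ i ∧ i < n := by
  by_contra h
  rw [pad_eq_three f h] at hi
  omega

theorem pad_cons (a : Fin 3) (i : ℤ) :
    pad (Fin.cons a f : Fin (n + 1) → Fin 3) i = if i = 0 then (a : ℕ) else pad f (i - 1) := by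
  obtain hi | rfl | hi := lt_trichotomy i 0
  · rw [pad_of_neg _ hi, pad_of_neg _ (by omega), if_neg hi.ne]
  · simp [pad]
  · obtain ⟨m, rfl⟩ : ∃ m : ℕ, i = m + 1 := ⟨i.toNat - 1, by omega⟩
    by_cases hm : m < n
    · have := pad_coe (Fin.cons a f : Fin (n + 1) → Fin 3) (Fin.succ ⟨m, hm⟩)
      simp only [Fin.cons_succ, Fin.val_succ] at this
      push_cast at this
      rw [this, if_neg (by omega), add_sub_cancel_right, ← pad_coe f ⟨m, hm⟩]
    · rw [pad_eq_three _ (by omega), pad_eq_three _ (by omega), if_neg (by omega)]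

theorem pad_zero_eq_two_iff : pad f 0 = 2 ↔ ∃ h : 0 < n, f ⟨0, h⟩ = 2 := by
  by_cases h : 0 < n
  · simp [pad, h, Fin.ext_iff]
  · simp [pad, h]

end Pad

theorem exists_pathGraph_adj_iff {n : ℕ} (v : Fin n) {Q : ℤ → Prop}
    (hQ : ∀ i, Q i → 0 ≤ i ∧ i < n) :
    (∃ u, (pathGraph n).Adj v u ∧ Q u) ↔ Q (v - 1) ∨ Q (v + 1) := by
  constructor
  · rintro ⟨u, hvu, hu⟩
    rcases pathGraph_adj.1 hvu with h | h
    · exact Or.inr (by convert hu using 1; omega)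
    · exact Or.inl (by convert hu using 1; omega)
  · rintro (h | h) <;> obtain ⟨h0, hn⟩ := hQ _ h
    · refine ⟨⟨(v - 1 : ℤ).toNat, by omega⟩, pathGraph_adj.2 (Or.inr (by simp; omega)),
        ?_⟩
      convert h using 1; simp; omega
    · refine ⟨⟨(v + 1 : ℤ).toNat, by omega⟩, pathGraph_adj.2 (Or.inl (by simp)), ?_⟩
      convert h using 1; simp

section PathGraph

variable {n : ℕ} (f : Fin n → Fin 3)

theorem exists_pathGraph_adj_eq_iff (v : Fin n) (c : Fin 3) :
    (∃ u, (pathGraph n).Adj v u ∧ f u = c) ↔ pad f (v - 1) = c ∨ pad f (v + 1) = c := by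
  simp_rw [← pad_coe_eq_iff]
  exact exists_pathGraph_adj_iff v (Q := fun i => pad f i = c)
    fun i hi => mem_range_of_pad_lt_three f (by omega)

/-- The neighbours of `u` are `v` and its reflection `2u - v` through `u`. -/
theorem forall_pathGraph_adj_ne_iff {u v : Fin n} (huv : (pathGraph n).Adj u v) (c : Fin 3) :
    (∀ w, (pathGraph n).Adj u w → w ≠ v → f w ≠ c) ↔ pad f (2 * u - v) ≠ c := by
  have key := exists_pathGraph_adj_iff u (Q := fun i => i ≠ v ∧ pad f i = c)
    fun i hi => mem_range_of_pad_lt_three f (by omega)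
  have hreflect : pad f (2 * u - v) = c ↔ (u - 1 : ℤ) ≠ v ∧ pad f (u - 1) = c ∨
      (u + 1 : ℤ) ≠ v ∧ pad f (u + 1) = c := by
    rcases pathGraph_adj.1 huv with h | h
    · rw [show (2 * u - v : ℤ) = u - 1 by omega]; omega
    · rw [show (2 * u - v : ℤ) = u + 1 by omega]; omega
  rw [ne_eq, hreflect, ← key]
  simp [pad_coe_eq_iff, Fin.val_inj]

theorem pathMinimalAt_pad_iff (v : Fin n) :
    ((f v = 0 → ∃ u, (pathGraph n).Adj v u ∧ f u = 2) ∧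
      (f v = 1 → ∀ u, (pathGraph n).Adj v u → f u ≠ 2) ∧
      (f v = 2 → ∃ u, (pathGraph n).Adj v u ∧ f u = 0 ∧
        ∀ w, (pathGraph n).Adj u w → w ≠ v → f w ≠ 2)) ↔ PathMinimalAt (pad f) v := by
  have hdom := exists_pathGraph_adj_eq_iff f v 2
  have hpriv : (∃ u, (pathGraph n).Adj v u ∧ f u = 0 ∧
      ∀ w, (pathGraph n).Adj u w → w ≠ v → f w ≠ 2) ↔
      pad f (v - 1) = 0 ∧ pad f (v - 2) ≠ 2 ∨ pad f (v + 1) = 0 ∧ pad f (v + 2) ≠ 2 := by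
    rw [← show (2 * (v - 1) - v : ℤ) = v - 2 by ring,
      ← show (2 * (v + 1) - v : ℤ) = v + 2 by ring]
    refine (exists_congr fun u => and_congr_right fun hvu =>
      and_congr (pad_coe_eq_iff f u 0).symm (forall_pathGraph_adj_ne_iff f hvu.symm 2)).trans
      (exists_pathGraph_adj_iff v (Q := fun i => pad f i = 0 ∧ pad f (2 * i - v) ≠ 2)
        fun i hi => mem_range_of_pad_lt_three f (by omega))
  refine and_congr (imp_congr (pad_coe_eq_iff f v 0).symm hdom)
    (and_congr (imp_congr (pad_coe_eq_iff f v 1).symm ?_)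
      (imp_congr (pad_coe_eq_iff f v 2).symm hpriv))
  simpa using hdom.not

theorem pathMinimal_pad_iff_forall_fin :
    PathMinimal (pad f) ↔ ∀ v : Fin n, PathMinimalAt (pad f) v := by
  refine ⟨fun h v => h v, fun h i => ?_⟩
  by_cases hi : 0 ≤ i ∧ i < n
  · simpa [show ((i.toNat : ℕ) : ℤ) = i by omega] using h ⟨i.toNat, by omega⟩
  · simp [PathMinimalAt, pad_eq_three f hi]

theorem isMinimalRDF_pathGraph_iff : IsMinimalRDF (pathGraph n) f ↔ PathMinimal (pad f) := by
  rw [isMinimalRDF_iff, pathMinimal_pad_iff_forall_fin]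
  exact forall_congr' (pathMinimalAt_pad_iff f)

end PathGraph

theorem pathMinimalAt_congr {F G : ℤ → ℕ} {i j : ℤ}
    (h : ∀ d, -2 ≤ d → d ≤ 2 → F (i + d) = G (j + d)) :
    PathMinimalAt F i ↔ PathMinimalAt G j := by
  have h0 := h 0
  have h1 := h 1
  have h2 := h 2
  have h3 := h (-1)
  have h4 := h (-2)
  simp only [add_zero, ← sub_eq_add_neg, le_refl, Int.reduceLE, Int.reduceNeg, forall_const]
    at h0 h1 h2 h3 h4
  simp only [PathMinimalAt, h0, h1, h2, h3, h4]

section Cons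

variable {n : ℕ} (g : Fin n → Fin 3)

theorem pathMinimal_pad_iff :
    PathMinimal (pad g) ↔ PathMinimalAt (pad g) 0 ∧ PathMinimalAt (pad g) 1 ∧
      ∀ i ≥ 2, PathMinimalAt (pad g) i := by
  refine ⟨fun h => ⟨h 0, h 1, fun i _ => h i⟩, fun ⟨h0, h1, h⟩ i => ?_⟩
  obtain hi | rfl | rfl | hi : i < 0 ∨ i = 0 ∨ i = 1 ∨ 2 ≤ i := by omega
  · simp [PathMinimalAt, pad_of_neg g hi]
  · exact h0
  · exact h1
  · exact h i hi

theorem forall_ge_two_pathMinimalAt_pad_cons (a : Fin 3) :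
    (∀ i ≥ 2, PathMinimalAt (pad (Fin.cons a g : Fin (n + 1) → Fin 3)) i) ↔
      PathMinimalAt (pad (Fin.cons a g : Fin (n + 1) → Fin 3)) 2 ∧
        ∀ i ≥ 2, PathMinimalAt (pad g) i := by
  have shift : ∀ i ≥ 2, PathMinimalAt (pad (Fin.cons a g : Fin (n + 1) → Fin 3)) (i + 1) ↔
      PathMinimalAt (pad g) i := fun i hi =>
    pathMinimalAt_congr fun d _ _ => by
      rw [pad_cons, if_neg (by omega), add_right_comm, add_sub_cancel_right]
  refine ⟨fun h => ⟨h 2 le_rfl, fun i hi => (shift i hi).1 (h _ (by omega))⟩,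
    fun ⟨h2, h⟩ i hi => ?_⟩
  obtain rfl | hi := hi.eq_or_lt
  · exact h2
  · simpa using (shift (i - 1) (by omega)).2 (h _ (by omega))

end Cons

section Blocks

variable {n : ℕ}

theorem isMinimalRDF_cons_one_iff (g : Fin n → Fin 3) :
    IsMinimalRDF (pathGraph (n + 1)) (Fin.cons 1 g) ↔
      IsMinimalRDF (pathGraph n) g ∧ ∀ h : 0 < n, g ⟨0, h⟩ ≠ 2 := by
  simp only [isMinimalRDF_pathGraph_iff, ← not_exists, ← pad_zero_eq_two_iff,
    pathMinimal_pad_iff, forall_ge_two_pathMinimalAt_pad_cons]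
  generalize (∀ i ≥ 2, PathMinimalAt (pad g) i) = R
  simp [PathMinimalAt, pad_cons, pad_of_neg]
  grind

theorem not_isMinimalRDF_cons_zero_cons {b : Fin 3} (hb : b ≠ 2) (g : Fin n → Fin 3) :
    ¬IsMinimalRDF (pathGraph (n + 2)) (Fin.cons 0 (Fin.cons b g)) := by
  rw [isMinimalRDF_pathGraph_iff]
  intro h
  have := (h 0).1
  simp [pad_cons, pad_of_neg] at this
  omega

theorem not_isMinimalRDF_cons_zero_two_one (w : Fin n → Fin 3) :
    ¬IsMinimalRDF (pathGraph (n + 3)) (Fin.cons 0 (Fin.cons 2 (Fin.cons 1 w))) := by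
  rw [isMinimalRDF_pathGraph_iff]
  intro h
  simpa [pad_cons] using (h 2).2.1

theorem isMinimalRDF_cons_zero_two_two_iff (w : Fin n → Fin 3) :
    IsMinimalRDF (pathGraph (n + 3)) (Fin.cons 0 (Fin.cons 2 (Fin.cons 2 w))) ↔
      IsMinimalRDF (pathGraph (n + 1)) (Fin.cons 2 w) := by
  simp only [isMinimalRDF_pathGraph_iff, pathMinimal_pad_iff,
    forall_ge_two_pathMinimalAt_pad_cons]
  generalize (∀ i ≥ 2, PathMinimalAt (pad w) i) = R
  simp [PathMinimalAt, pad_cons, pad_of_neg]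

theorem isMinimalRDF_cons_zero_two_zero_iff (w : Fin n → Fin 3) :
    IsMinimalRDF (pathGraph (n + 3)) (Fin.cons 0 (Fin.cons 2 (Fin.cons 0 w))) ↔
      IsMinimalRDF (pathGraph n) w := by
  simp only [isMinimalRDF_pathGraph_iff, pathMinimal_pad_iff,
    forall_ge_two_pathMinimalAt_pad_cons]
  generalize (∀ i ≥ 2, PathMinimalAt (pad w) i) = R
  simp [PathMinimalAt, pad_cons, pad_of_neg]

end Blocks

theorem Fin.cons_mem_image_cons_iff {α : Type*} {n : ℕ} {a b : α} {x : Fin n → α}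
    {S : Set (Fin n → α)} :
    (Fin.cons a x : Fin (n + 1) → α) ∈ Fin.cons b '' S ↔ a = b ∧ x ∈ S := by
  simp [Fin.cons_inj, eq_comm, and_comm]

theorem setOf_isMinimalRDF_head_ne_two_eq (n : ℕ) :
    {f : Fin (n + 3) → Fin 3 | IsMinimalRDF (pathGraph (n + 3)) f ∧
        ∀ h : 0 < n + 3, f ⟨0, h⟩ ≠ 2} =
      Fin.cons 1 '' {g | IsMinimalRDF (pathGraph (n + 2)) g ∧
        ∀ h : 0 < n + 2, g ⟨0, h⟩ ≠ 2} ∪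
      Fin.cons 0 '' (Fin.cons 2 '' ({h | IsMinimalRDF (pathGraph (n + 1)) h ∧
        ∃ h' : 0 < n + 1, h ⟨0, h'⟩ = 2} ∪ Fin.cons 0 '' {w | IsMinimalRDF (pathGraph n) w})) := by
  ext f
  induction f using Fin.consCases with | cons a g => ?_
  induction g using Fin.consCases with | cons b h => ?_
  induction h using Fin.consCases with | cons c w => ?_
  simp only [Set.mem_ofPred_eq, Set.mem_union, Fin.cons_mem_image_cons_iff, Fin.zero_eta,
    Fin.cons_zero]
  fin_cases a
  · fin_cases b
    · simp [not_isMinimalRDF_cons_zero_cons]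
    · simp [not_isMinimalRDF_cons_zero_cons]
    · fin_cases c
      · simp [isMinimalRDF_cons_zero_two_zero_iff]
      · simp [not_isMinimalRDF_cons_zero_two_one]
      · simp [isMinimalRDF_cons_zero_two_two_iff]
  · simp [isMinimalRDF_cons_one_iff]
  · simp

theorem ncard_image_cons_union_image_cons {α : Type*} [Finite α] {n : ℕ} {a b : α} (hab : a ≠ b)
    (S T : Set (Fin n → α)) :
    (Fin.cons a '' S ∪ Fin.cons b '' T : Set (Fin (n + 1) → α)).ncard = S.ncard + T.ncard := by
  rw [Set.ncard_union_eq,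
    Set.ncard_image_of_injective _ (Fin.cons_right_injective (α := fun _ => α) a),
    Set.ncard_image_of_injective _ (Fin.cons_right_injective (α := fun _ => α) b)]
  rw [Set.disjoint_left]
  rintro _ ⟨x, -, rfl⟩ ⟨y, -, h⟩
  exact hab (Fin.cons_inj.1 h).1.symm

theorem CPbar2_add_three (n : ℕ) : CPbar2 (n + 3) = CPbar2 (n + 2) + CP2 (n + 1) + CP n := by
  rw [CPbar2, setOf_isMinimalRDF_head_ne_two_eq, ncard_image_cons_union_image_cons (by decide),
    Set.ncard_image_of_injective _ (Fin.cons_right_injective (α := fun _ => Fin 3) 2),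
    Set.ncard_union_eq, Set.ncard_image_of_injective _ (Fin.cons_right_injective _), ← add_assoc]
  · rfl
  rw [Set.disjoint_left]
  rintro _ ⟨-, _, h2⟩ ⟨w, -, rfl⟩
  simp at h2

/-- Recursion for `C_{P,2̄,n}`: initial values `1, 2, 3` for `n = 1, 2, 3`, and
`C_{P,2̄,n} = C_{P,2̄,n-1} + C_{P,2,n-2} + C_{P,n-3}` for `n > 3`. -/
theorem CPbar2_recursion :
    CPbar2 1 = 1 ∧ CPbar2 2 = 2 ∧ CPbar2 3 = 3 ∧
    ∀ n : ℕ, 3 < n → CPbar2 n = CPbar2 (n - 1) + CP2 (n - 2) + CP (n - 3) := by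
  have initial : CPbar2 1 = 1 ∧ CPbar2 2 = 2 ∧ CPbar2 3 = 3 := by
    simp only [CPbar2, isMinimalRDF_iff, pathGraph_adj]
    refine ⟨?_, ?_, ?_⟩ <;> rw [Set.ncard_eq_toFinset_card'] <;> decide
  refine ⟨initial.1, initial.2.1, initial.2.2, fun n hn => ?_⟩
  obtain ⟨m, rfl⟩ : ∃ m, n = m + 3 := ⟨n - 3, by omega⟩
  rw [show m + 3 - 1 = m + 2 by omega, show m + 3 - 2 = m + 1 by omega, Nat.add_sub_cancel]
  exact CPbar2_add_three m
end

section
/- For every n ≥ 3, the number of minimal Roman dominating functions of the path P_n satisfies C_{P,n} = C_{P,2̄,n} + C_{P,2̄,n−2}. -/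
/-!
If a minimal rdf `f` of `P_{m+2}` has `f v₁ = 2`, then `v₁` needs a private neighbour (a vertex
of value 0 whose only neighbour of value 2 is `v₁`), since otherwise lowering `f v₁` to 1 would
give a smaller rdf. That neighbour can only be `v₂`, so `f v₂ = 0` and `f v₃ ≠ 2`. Deleting `v₁`
and `v₂` is then a bijection onto the minimal rdf of `P_m` not starting with 2, so
`C_{P,2,n} = C_{P,2̄,n-2}`, while `C_{P,n} = C_{P,2̄,n} + C_{P,2,n}` by splitting on `f v₁`.
-/

open SimpleGraph

theorem IsMinimalRDF.exists_private_neighbor {V : Type*} {G : SimpleGraph V} {f : V → Fin 3}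
    (hf : IsMinimalRDF G f) {v : V} (hv : f v = 2) :
    ∃ u, G.Adj v u ∧ f u = 0 ∧ ∀ w, G.Adj u w → f w = 2 → w = v := by
  by_contra! hnot
  classical
  have hrdf : IsRDF G (Function.update f v 1) := by
    intro x hx
    have hxv : x ≠ v := by rintro rfl; simp at hx
    rw [Function.update_of_ne hxv] at hx
    obtain ⟨u, hxu, hu⟩ := hf.1 x hx
    by_cases huv : u = v
    · subst huv
      obtain ⟨w, huw, hw, hwu⟩ := hnot x hxu.symm hx
      exact ⟨w, huw, by rwa [Function.update_of_ne hwu]⟩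
    · exact ⟨u, hxu, by rwa [Function.update_of_ne huv]⟩
  have hle : Function.update f v 1 ≤ f :=
    update_le_iff.2 ⟨by simp [hv], fun _ _ => le_rfl⟩
  have := congrFun (hf.2 _ hrdf hle) v
  simp [hv] at this

theorem isRDF_cons_cons_zero_iff {m : ℕ} {a : Fin 3} {g : Fin m → Fin 3} :
    IsRDF (pathGraph (m + 2)) (Fin.cons a (Fin.cons 0 g) : Fin (m + 2) → Fin 3) ↔
      a ≠ 0 ∧ (a = 2 ∨ ∃ h : 0 < m, g ⟨0, h⟩ = 2) ∧ IsRDF (pathGraph m) g := by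
  simp [IsRDF, Fin.forall_fin_succ, Fin.exists_fin_succ, pathGraph_adj]
  simp [Fin.exists_iff, eq_comm]

theorem IsMinimalRDF.eq_zero_and_head_ne_two {m : ℕ} {b : Fin 3} {g : Fin m → Fin 3}
    (hf : IsMinimalRDF (pathGraph (m + 2)) (Fin.cons 2 (Fin.cons b g) : Fin (m + 2) → Fin 3)) :
    b = 0 ∧ ∀ h : 0 < m, g ⟨0, h⟩ ≠ 2 := by
  obtain ⟨u, h0u, hu, hpriv⟩ := hf.exists_private_neighbor (v := 0) rfl
  obtain rfl : u = 1 := by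
    rw [pathGraph_adj] at h0u
    ext; simp at h0u ⊢; omega
  refine ⟨hu, fun h hg => ?_⟩
  have := hpriv ⟨2, by omega⟩ (by simp [pathGraph_adj]) hg
  simp [Fin.ext_iff] at this

theorem isMinimalRDF_cons_two_cons_zero_iff {m : ℕ} {g : Fin m → Fin 3} :
    IsMinimalRDF (pathGraph (m + 2)) (Fin.cons 2 (Fin.cons 0 g) : Fin (m + 2) → Fin 3) ↔
      IsMinimalRDF (pathGraph m) g ∧ ∀ h : 0 < m, g ⟨0, h⟩ ≠ 2 := by
  constructor
  · intro hf
    refine ⟨⟨(isRDF_cons_cons_zero_iff.1 hf.1).2.2, fun g' hg' hle => ?_⟩,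
      hf.eq_zero_and_head_ne_two.2⟩
    have hext := isRDF_cons_cons_zero_iff.2 ⟨by decide, Or.inl rfl, hg'⟩
    exact Fin.cons_right_injective _ <| Fin.cons_right_injective _ <|
      hf.2 _ hext (Fin.cons_le_cons.2 ⟨le_rfl, Fin.cons_le_cons.2 ⟨le_rfl, hle⟩⟩)
  · rintro ⟨hg, hhead⟩
    refine ⟨isRDF_cons_cons_zero_iff.2 ⟨by decide, Or.inl rfl, hg.1⟩, fun f' hf' hle => ?_⟩
    induction f' using Fin.consCases with | _ a f' => ?_
    induction f' using Fin.consCases with | _ b g' => ?_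
    obtain ⟨ha, hb, hg'⟩ := by simpa only [Fin.cons_le_cons] using hle
    obtain rfl : b = 0 := le_antisymm hb (Fin.zero_le _)
    obtain ⟨-, ha2, hg'rdf⟩ := isRDF_cons_cons_zero_iff.1 hf'
    obtain rfl := hg.2 g' hg'rdf hg'
    obtain rfl : a = 2 := ha2.resolve_right fun ⟨h, h2⟩ => hhead h h2
    rfl

theorem setOf_isMinimalRDF_head_eq_two (m : ℕ) :
    {f : Fin (m + 2) → Fin 3 |
        IsMinimalRDF (pathGraph (m + 2)) f ∧ ∃ h : 0 < m + 2, f ⟨0, h⟩ = 2} =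
      (fun g => Fin.cons 2 (Fin.cons 0 g)) ''
        {g : Fin m → Fin 3 |
          IsMinimalRDF (pathGraph m) g ∧ ∀ h : 0 < m, g ⟨0, h⟩ ≠ 2} := by
  ext f
  induction f using Fin.consCases with | _ a f => ?_
  induction f using Fin.consCases with | _ b g => ?_
  simp only [Set.mem_ofPred_eq, Set.mem_image, Fin.cons_inj]
  constructor
  · rintro ⟨hf, -, rfl⟩
    obtain rfl := hf.eq_zero_and_head_ne_two.1
    exact ⟨g, isMinimalRDF_cons_two_cons_zero_iff.1 hf, rfl, rfl, rfl⟩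
  · rintro ⟨g, hg, rfl, rfl, rfl⟩
    exact ⟨isMinimalRDF_cons_two_cons_zero_iff.2 hg, by omega, rfl⟩

theorem CP_eq_CPbar2_add_CP2 (n : ℕ) : CP n = CPbar2 n + CP2 n := by
  rw [CP, numMinRDF, CP2, CPbar2, add_comm, ← Set.ncard_inter_add_ncard_sdiff_eq_ncard _
    {f : Fin n → Fin 3 | ∃ h : 0 < n, f ⟨0, h⟩ = 2}]
  congr 2
  ext f
  simp

theorem CP2_add_two (m : ℕ) : CP2 (m + 2) = CPbar2 m := by
  have hinj : Function.Injective
      fun g : Fin m → Fin 3 => (Fin.cons 2 (Fin.cons 0 g) : Fin (m + 2) → Fin 3) :=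
    fun _ _ h => Fin.cons_right_injective _ (Fin.cons_right_injective _ h)
  rw [CP2, setOf_isMinimalRDF_head_eq_two, Set.ncard_image_of_injective _ hinj, CPbar2]

/-- For `n ≥ 3`, `C_{P,n} = C_{P,2̄,n} + C_{P,2̄,n-2}`. -/
theorem CP_eq_CPbar2_add (n : ℕ) (hn : 3 ≤ n) :
    CP n = CPbar2 n + CPbar2 (n - 2) := by
  obtain ⟨m, rfl⟩ : ∃ m, n = m + 2 := ⟨n - 2, by omega⟩
  rw [CP_eq_CPbar2_add_CP2, CP2_add_two, Nat.add_sub_cancel]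
end

section
/- Let α be the unique real root of x³ = x² + 1 (so 1.46 < α < 1.47). There exists a polynomial p such that every cobipartite graph of order n has at most p(n) · α^n minimal Roman dominating functions. -/
/-!
A minimal rdf is determined by the set `T` of its vertices labelled `2`, and every `v ∈ T` has a
private neighbour, labelled `0` and adjacent to no other vertex of `T`. If one clique contains two
vertices of `T`, then all of `T` lies in that clique and all private neighbours lie in the other
one; otherwise `|T| ≤ 2`.

Sets `T ⊆ A` whose elements have private witnesses in `B` are counted by branching on `v ∈ A`.
If `v` has at least two possible witnesses, putting `v` into `T` discards `v` and all of them;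
if it has a single one `u`, it discards `v`, `u` and the other neighbours of `u` in `A`, and when
there are none, leaving `v` out of `T` makes `u` useless. This gives the branching vectors
`(1, 3)` and `(2, 2)`, and both are bounded by `αⁿ` because `α³ = α² + 1` and `α² ≥ 2`.
-/

open Finset Function

section Branching

variable {α x y : ℝ} {i j n : ℕ}

lemma one_lt_of_pow_three_eq (hα : α ^ 3 = α ^ 2 + 1) : 1 < α := by
  nlinarith [sq_nonneg α]

lemma add_le_pow_of_branching_two_two (hα : α ^ 3 = α ^ 2 + 1) (hx : x ≤ α ^ i) (hy : y ≤ α ^ j)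
    (hi : i + 2 ≤ n) (hj : j + 2 ≤ n) : x + y ≤ α ^ n := by
  have h1 := one_lt_of_pow_three_eq hα
  obtain ⟨m, rfl⟩ : ∃ m, n = m + 2 := ⟨n - 2, by omega⟩
  have hi' : α ^ i ≤ α ^ m := pow_le_pow_right₀ h1.le (by omega)
  have hj' : α ^ j ≤ α ^ m := pow_le_pow_right₀ h1.le (by omega)
  have hsq : 2 ≤ α ^ 2 := by nlinarith [sq_nonneg α]
  have hm : 0 ≤ α ^ m := by positivity
  rw [pow_add]
  nlinarith

lemma add_le_pow_of_branching_one_three (hα : α ^ 3 = α ^ 2 + 1) (hx : x ≤ α ^ i)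
    (hy : y ≤ α ^ j) (hi : i + 1 ≤ n) (hj : j + 3 ≤ n) : x + y ≤ α ^ n := by
  have h1 := one_lt_of_pow_three_eq hα
  obtain ⟨m, rfl⟩ : ∃ m, n = m + 3 := ⟨n - 3, by omega⟩
  have hi' : α ^ i ≤ α ^ (m + 2) := pow_le_pow_right₀ h1.le (by omega)
  have hj' : α ^ j ≤ α ^ m := pow_le_pow_right₀ h1.le (by omega)
  have : α ^ (m + 3) = α ^ (m + 2) + α ^ m := by rw [pow_add, hα]; ring
  linarith

end Branching

section PrivateFamily

variable {ι κ : Type*} [DecidableEq ι] {A A' : Finset ι} {B B' : Finset κ} {N : κ → Finset ι}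
  {T : Finset ι} {u : κ} {v : ι} {α : ℝ}

/-- For a minimal rdf of a cobipartite graph, `T` is the set of vertices labelled `2`, `A` and `B`
are the two cliques, `N` is the neighbourhood function and `w` is a private neighbour of `v`. -/
def privateFamily (A : Finset ι) (B : Finset κ) (N : κ → Finset ι) : Finset (Finset ι) :=
  {T ∈ A.powerset | ∀ v ∈ T, ∃ w ∈ B, N w ∩ T = {v}}

@[simp]
lemma mem_privateFamily :
    T ∈ privateFamily A B N ↔ T ⊆ A ∧ ∀ v ∈ T, ∃ w ∈ B, N w ∩ T = {v} := by
  rw [privateFamily, mem_filter, mem_powerset]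

lemma privateFamily_empty_left : privateFamily ∅ B N = {∅} := by
  ext T
  simp +contextual [subset_empty]

lemma mem_privateFamily_erase_left (hT : T ∈ privateFamily A B N) (hv : v ∉ T) :
    T ∈ privateFamily (A.erase v) B N := by
  rw [mem_privateFamily] at hT ⊢
  exact ⟨subset_erase.2 ⟨hT.1, hv⟩, hT.2⟩

lemma mem_privateFamily_erase_erase [DecidableEq κ] (hT : T ∈ privateFamily A B N) (hv : v ∉ T)
    (hu : A ∩ N u ⊆ {v}) : T ∈ privateFamily (A.erase v) (B.erase u) N := by
  have hT' := mem_privateFamily_erase_left hT hv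
  rw [mem_privateFamily] at hT' ⊢
  refine ⟨hT'.1, fun x hx => ?_⟩
  obtain ⟨w, hwB, hw⟩ := hT'.2 x hx
  refine ⟨w, mem_erase.2 ⟨?_, hwB⟩, hw⟩
  rintro rfl
  have hxv : x ∈ ({v} : Finset ι) :=
    hu (mem_inter.2 ⟨mem_of_mem_erase (hT'.1 hx),
      mem_of_mem_inter_left (hw ▸ mem_singleton_self x)⟩)
  exact hv (mem_singleton.1 hxv ▸ hx)

lemma erase_mem_privateFamily (hT : T ∈ privateFamily A B N) (hv : v ∈ T) :
    T.erase v ∈ privateFamily (A.erase v) {w ∈ B | v ∉ N w} N := by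
  rw [mem_privateFamily] at hT ⊢
  refine ⟨erase_subset_erase v hT.1, fun x hx => ?_⟩
  obtain ⟨hxv, hxT⟩ := mem_erase.1 hx
  obtain ⟨w, hwB, hw⟩ := hT.2 x hxT
  have hvw : v ∉ N w := fun hvw =>
    hxv (mem_singleton.1 (hw ▸ mem_inter.2 ⟨hvw, hv⟩)).symm
  refine ⟨w, mem_filter.2 ⟨hwB, hvw⟩, ?_⟩
  rw [inter_erase, hw, erase_eq_of_notMem (by simpa using hxv.symm)]

lemma erase_mem_privateFamily_of_unique [DecidableEq κ] (hT : T ∈ privateFamily A B N) (hv : v ∈ T)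
    (hu : ∀ w ∈ B, v ∈ N w → w = u) : T.erase v ∈ privateFamily (A \ N u) (B.erase u) N := by
  obtain ⟨w, hwB, hw⟩ := (mem_privateFamily.1 hT).2 v hv
  obtain rfl := hu w hwB (mem_of_mem_inter_left (hw ▸ mem_singleton_self v))
  have hT' := mem_privateFamily.1 (erase_mem_privateFamily hT hv)
  rw [mem_privateFamily]
  refine ⟨fun x hx => mem_sdiff.2 ⟨mem_of_mem_erase (hT'.1 hx), fun hxw => ?_⟩, fun x hx => ?_⟩
  · have := hw ▸ mem_inter.2 ⟨hxw, mem_of_mem_erase hx⟩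
    exact (mem_erase.1 hx).1 (mem_singleton.1 this)
  · obtain ⟨w', hw'B, hw'⟩ := hT'.2 x hx
    obtain ⟨hw'B, hvw'⟩ := mem_filter.1 hw'B
    refine ⟨w', mem_erase.2 ⟨?_, hw'B⟩, hw'⟩
    rintro rfl
    exact hvw' (mem_of_mem_inter_left (hw ▸ mem_singleton_self v))

lemma card_filter_mem_le
    (h : ∀ T ∈ privateFamily A B N, v ∈ T → T.erase v ∈ privateFamily A' B' N) :
    #{T ∈ privateFamily A B N | v ∈ T} ≤ #(privateFamily A' B' N) := by
  refine card_le_card_of_injOn (·.erase v) (fun T hT => ?_) ?_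
  · obtain ⟨hT, hvT⟩ := mem_filter.1 hT
    exact h T hT hvT
  · exact (erase_injOn' v).mono fun T hT => (mem_filter.1 hT).2

lemma card_filter_notMem_le (hv : v ∈ A)
    (ih : ∀ A' ⊂ A, ∀ B' : Finset κ, (#(privateFamily A' B' N) : ℝ) ≤ α ^ (#A' + #B')) :
    (#{T ∈ privateFamily A B N | v ∉ T} : ℝ) ≤ α ^ (#(A.erase v) + #B) :=
  le_trans (by exact_mod_cast card_le_card fun T hT =>
    mem_privateFamily_erase_left (mem_filter.1 hT).1 (mem_filter.1 hT).2)
    (ih _ (erase_ssubset hv) B)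

lemma card_privateFamily_le_of_unique_witness [DecidableEq κ] (hα : α ^ 3 = α ^ 2 + 1) (hv : v ∈ A)
    (hBv : {w ∈ B | v ∈ N w} = {u})
    (ih : ∀ A' ⊂ A, ∀ B' : Finset κ, (#(privateFamily A' B' N) : ℝ) ≤ α ^ (#A' + #B')) :
    (#(privateFamily A B N) : ℝ) ≤ α ^ (#A + #B) := by
  have hu : ∀ w ∈ B, v ∈ N w → w = u := fun w hwB hvw =>
    mem_singleton.1 (hBv ▸ mem_filter.2 ⟨hwB, hvw⟩)
  obtain ⟨huB, hvu⟩ := mem_filter.1 (hBv ▸ mem_singleton_self u)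
  have hA : #(A.erase v) + 1 = #A := card_erase_add_one hv
  have hB : #(B.erase u) + 1 = #B := card_erase_add_one huB
  have hAu : #(A \ N u) + #(A ∩ N u) = #A := card_sdiff_add_card_inter A (N u)
  have hwith : (#{T ∈ privateFamily A B N | v ∈ T} : ℝ) ≤ α ^ (#(A \ N u) + #(B.erase u)) :=
    le_trans (by exact_mod_cast card_filter_mem_le fun T hT hvT =>
        erase_mem_privateFamily_of_unique hT hvT hu)
      (ih _ (ssubset_of_subset_of_ne sdiff_subset fun h => (mem_sdiff.1 (h ▸ hv)).2 hvu) _)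
  rw [← card_filter_add_card_filter_not (s := privateFamily A B N) (v ∉ ·)]
  simp only [not_not]
  push_cast
  by_cases hpendant : A ∩ N u ⊆ {v}
  · have hwithout : (#{T ∈ privateFamily A B N | v ∉ T} : ℝ) ≤
        α ^ (#(A.erase v) + #(B.erase u)) :=
      le_trans (by exact_mod_cast card_le_card fun T hT =>
        mem_privateFamily_erase_erase (mem_filter.1 hT).1 (mem_filter.1 hT).2 hpendant)
        (ih _ (erase_ssubset hv) _)
    have : 1 ≤ #(A ∩ N u) := card_pos.2 ⟨v, mem_inter.2 ⟨hv, hvu⟩⟩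
    exact add_le_pow_of_branching_two_two hα hwithout hwith (by omega) (by omega)
  · have : 1 < #(A ∩ N u) := by
      obtain ⟨x, hx, hxv⟩ := not_subset.1 hpendant
      exact one_lt_card.2 ⟨x, hx, v, mem_inter.2 ⟨hv, hvu⟩, by simpa using hxv⟩
    exact add_le_pow_of_branching_one_three hα (card_filter_notMem_le hv ih) hwith
      (by omega) (by omega)

theorem card_privateFamily_le [DecidableEq κ] (hα : α ^ 3 = α ^ 2 + 1) (A : Finset ι) (B : Finset κ)
    (N : κ → Finset ι) : (#(privateFamily A B N) : ℝ) ≤ α ^ (#A + #B) := by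
  induction A using Finset.strongInduction generalizing B with
  | H A ih =>
  obtain rfl | ⟨v, hv⟩ := A.eq_empty_or_nonempty
  · simpa [privateFamily_empty_left] using one_le_pow₀ (one_lt_of_pow_three_eq hα).le
  have hA : #(A.erase v) + 1 = #A := card_erase_add_one hv
  have hB : #{w ∈ B | v ∈ N w} + #{w ∈ B | v ∉ N w} = #B := card_filter_add_card_filter_not _
  obtain hBv | hBv | hBv : #{w ∈ B | v ∈ N w} = 0 ∨ #{w ∈ B | v ∈ N w} = 1 ∨
      1 < #{w ∈ B | v ∈ N w} := by omega
  · have hvT : ∀ T ∈ privateFamily A B N, v ∉ T := fun T hT hvT => by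
      obtain ⟨w, hwB, hw⟩ := (mem_privateFamily.1 hT).2 v hvT
      exact filter_eq_empty_iff.1 (card_eq_zero.1 hBv) hwB
        (mem_of_mem_inter_left (hw ▸ mem_singleton_self v))
    calc (#(privateFamily A B N) : ℝ) ≤ #(privateFamily (A.erase v) B N) := by
          exact_mod_cast card_le_card fun T hT => mem_privateFamily_erase_left hT (hvT T hT)
      _ ≤ α ^ (#(A.erase v) + #B) := ih _ (erase_ssubset hv) B
      _ ≤ α ^ (#A + #B) := pow_le_pow_right₀ (one_lt_of_pow_three_eq hα).le (by omega)
  · obtain ⟨u, hBu⟩ := card_eq_one.1 hBv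
    exact card_privateFamily_le_of_unique_witness hα hv hBu ih
  · have hwith : (#{T ∈ privateFamily A B N | v ∈ T} : ℝ) ≤
        α ^ (#(A.erase v) + #{w ∈ B | v ∉ N w}) :=
      le_trans (by exact_mod_cast card_filter_mem_le fun T hT hvT =>
        erase_mem_privateFamily hT hvT) (ih _ (erase_ssubset hv) _)
    rw [← card_filter_add_card_filter_not (s := privateFamily A B N) (v ∉ ·)]
    simp only [not_not]
    push_cast
    exact add_le_pow_of_branching_one_three hα (card_filter_notMem_le hv ih) hwith
      (by omega) (by omega)

end PrivateFamily

section MinimalRDF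

variable {V : Type*} {G : SimpleGraph V} {f g : V → Fin 3} {s : Set V} {u v v' : V}

lemma IsMinimalRDF.not_isRDF_update [DecidableEq V] (hf : IsMinimalRDF G f) {a : Fin 3}
    (ha : a < f v) : ¬IsRDF G (update f v a) := fun h =>
  ha.ne (by simpa using congrFun (hf.2 _ h (update_le_self_iff.2 ha.le)) v)

lemma IsMinimalRDF.not_adj_of_eq_one_of_eq_two (hf : IsMinimalRDF G f) (hv : f v = 1)
    (hu : f u = 2) : ¬G.Adj v u := by
  classical
  intro hvu
  refine hf.not_isRDF_update (a := 0) (v := v) (by simp [hv]) fun x hx => ?_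
  by_cases hxv : x = v
  · subst hxv
    exact ⟨u, hvu, by rwa [update_of_ne (by rintro rfl; simp_all)]⟩
  · obtain ⟨t, hxt, ht⟩ := hf.1 x (by simpa [hxv] using hx)
    exact ⟨t, hxt, by rwa [update_of_ne (by rintro rfl; simp_all)]⟩

lemma IsMinimalRDF.exists_private (hf : IsMinimalRDF G f) (hv : f v = 2) :
    ∃ w, G.Adj v w ∧ f w = 0 ∧ ∀ x, G.Adj w x → f x = 2 → x = v := by
  classical
  have h := hf.not_isRDF_update (a := 1) (v := v) (by simp [hv])
  simp only [IsRDF, not_forall, not_exists, not_and] at h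
  obtain ⟨w, hw0, hw⟩ := h
  have hwv : w ≠ v := by rintro rfl; simp at hw0
  rw [update_of_ne hwv] at hw0
  refine ⟨w, ?_, hw0, fun x hwx hx => by_contra fun hxv => hw x hwx (by rwa [update_of_ne hxv])⟩
  obtain ⟨t, hwt, ht⟩ := hf.1 w hw0
  obtain rfl : t = v := by_contra fun htv => hw t hwt (by rwa [update_of_ne htv])
  exact hwt.symm

lemma IsMinimalRDF.eq_zero_of_eq_two_iff (hf : IsMinimalRDF G f) (hg : IsMinimalRDF G g)
    (h : ∀ v, f v = 2 ↔ g v = 2) (hv : f v = 0) : g v = 0 := by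
  obtain ⟨u, hvu, hu⟩ := hf.1 v hv
  have h1 : g v ≠ 1 := fun h1 => hg.not_adj_of_eq_one_of_eq_two h1 ((h u).1 hu) hvu
  have h2 : g v ≠ 2 := fun h2 => by simp [(h v).2 h2] at hv
  omega

lemma IsMinimalRDF.eq_of_eq_two_iff (hf : IsMinimalRDF G f) (hg : IsMinimalRDF G g)
    (h : ∀ v, f v = 2 ↔ g v = 2) : f = g := by
  funext v
  have h0 : f v = 0 ↔ g v = 0 :=
    ⟨hf.eq_zero_of_eq_two_iff hg h, hg.eq_zero_of_eq_two_iff hf fun v => (h v).symm⟩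
  have h2 := h v
  omega

lemma IsMinimalRDF.exists_private_notMem (hf : IsMinimalRDF G f) (hs : G.IsClique s)
    (hv' : v' ∈ s) (hne : v ≠ v') (hv : f v = 2) (hv'2 : f v' = 2) :
    ∃ w ∉ s, G.Adj v w ∧ f w = 0 ∧ ∀ x, G.Adj w x → f x = 2 → x = v := by
  obtain ⟨w, hvw, hw0, hw⟩ := hf.exists_private hv
  refine ⟨w, fun hws => hne (hw v' (hs hws hv' fun h => ?_) hv'2).symm, hvw, hw0, hw⟩
  simp [h, hv'2] at hw0

lemma IsMinimalRDF.mem_of_eq_two (hf : IsMinimalRDF G f) (hs : G.IsClique s)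
    (hsc : G.IsClique sᶜ) (hv : v ∈ s) (hv' : v' ∈ s) (hne : v ≠ v') (hv2 : f v = 2)
    (hv'2 : f v' = 2) (hu : f u = 2) : u ∈ s := by
  by_contra hus
  obtain ⟨w, hws, -, hw0, hw⟩ := hf.exists_private_notMem hs hv' hne hv2 hv'2
  have hwu : w ≠ u := by rintro rfl; simp [hu] at hw0
  exact hus (hw u (hsc hws hus hwu) hu ▸ hv)

variable [Fintype V] [DecidableEq V] [DecidableRel G.Adj] {A : Finset V}

lemma IsMinimalRDF.filter_eq_two_mem_privateFamily (hf : IsMinimalRDF G f)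
    (hA : G.IsClique (A : Set V)) (hAc : G.IsClique (↑Aᶜ : Set V)) (h : 1 < #{v ∈ A | f v = 2}) :
    ({v | f v = 2} : Finset V) ∈ privateFamily A Aᶜ (G.neighborFinset ·) := by
  rw [coe_compl] at hAc
  obtain ⟨v₁, hv₁, v₂, hv₂, hne⟩ := one_lt_card.1 h
  simp only [mem_filter] at hv₁ hv₂
  have hsub : ∀ u, f u = 2 → u ∈ A := fun u hu =>
    hf.mem_of_eq_two hA hAc hv₁.1 hv₂.1 hne hv₁.2 hv₂.2 hu
  rw [mem_privateFamily]
  refine ⟨fun u hu => hsub u (mem_filter.1 hu).2, fun v hv => ?_⟩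
  replace hv : f v = 2 := (mem_filter.1 hv).2
  obtain ⟨v', hv', hne'⟩ := exists_mem_ne h v
  simp only [mem_filter] at hv'
  obtain ⟨w, hwA, hvw, -, hw⟩ := hf.exists_private_notMem hA hv'.1 hne'.symm hv hv'.2
  refine ⟨w, by simpa using hwA, ?_⟩
  ext x
  simp only [mem_inter, SimpleGraph.mem_neighborFinset, mem_filter, mem_univ, true_and,
    mem_singleton]
  exact ⟨fun ⟨hwx, hx⟩ => hw x hwx hx, by rintro rfl; exact ⟨hvw.symm, hv⟩⟩

lemma IsMinimalRDF.filter_eq_two_mem_privateFamily_or_card_le_two (hf : IsMinimalRDF G f)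
    (hA : G.IsClique (A : Set V)) (hAc : G.IsClique (↑Aᶜ : Set V)) :
    ({v | f v = 2} : Finset V) ∈ privateFamily A Aᶜ (G.neighborFinset ·) ∨
      ({v | f v = 2} : Finset V) ∈ privateFamily Aᶜ A (G.neighborFinset ·) ∨
      #{v | f v = 2} ≤ 2 := by
  by_cases h₁ : 1 < #{v ∈ A | f v = 2}
  · exact .inl (hf.filter_eq_two_mem_privateFamily hA hAc h₁)
  by_cases h₂ : 1 < #{v ∈ Aᶜ | f v = 2}
  · exact .inr (.inl (by simpa using hf.filter_eq_two_mem_privateFamily hAc (by simpa using hA) h₂))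
  have hsplit : ({v | f v = 2} : Finset V) = {v ∈ A | f v = 2} ∪ {v ∈ Aᶜ | f v = 2} := by
    ext v
    simp only [mem_filter, mem_univ, true_and, mem_union, mem_compl]
    tauto
  refine .inr (.inr ?_)
  rw [hsplit]
  exact (card_union_le _ _).trans (by omega)

lemma numMinRDF_le_of_isClique (hA : G.IsClique (A : Set V)) (hAc : G.IsClique (↑Aᶜ : Set V)) :
    numMinRDF G ≤ #(privateFamily A Aᶜ (G.neighborFinset ·)) +
      #(privateFamily Aᶜ A (G.neighborFinset ·)) + #{T : Finset V | #T ≤ 2} := by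
  have hinj : Set.InjOn (fun f : V → Fin 3 => ({v | f v = 2} : Finset V))
      {f | IsMinimalRDF G f} := fun f hf g hg h =>
    hf.eq_of_eq_two_iff hg fun v => by simpa using congrArg (v ∈ ·) h
  calc numMinRDF G
      ≤ (↑(privateFamily A Aᶜ (G.neighborFinset ·) ∪ privateFamily Aᶜ A (G.neighborFinset ·) ∪
          ({T : Finset V | #T ≤ 2} : Finset (Finset V))) : Set (Finset V)).ncard := by
        refine Set.ncard_le_ncard_of_injOn _ (fun f hf => ?_) hinj
        rcases hf.filter_eq_two_mem_privateFamily_or_card_le_two hA hAc with h | h | h <;>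
          simp [h]
    _ ≤ _ := by
      rw [Set.ncard_coe_finset]
      exact (card_union_le _ _).trans (Nat.add_le_add_right (card_union_le _ _) _)

end MinimalRDF

lemma card_filter_card_le_sum_pow (ι : Type*) [Fintype ι] [DecidableEq ι] (k : ℕ) :
    #{s : Finset ι | #s ≤ k} ≤ ∑ i ∈ range (k + 1), Fintype.card ι ^ i :=
  calc #{s : Finset ι | #s ≤ k}
      ≤ #((range (k + 1)).biUnion fun i => powersetCard i (univ : Finset ι)) :=
        card_le_card fun s hs => mem_biUnion.2
          ⟨#s, mem_range.2 (Nat.lt_succ_of_le (mem_filter.1 hs).2), mem_powersetCard_univ.2 rfl⟩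
    _ ≤ ∑ i ∈ range (k + 1), #(powersetCard i (univ : Finset ι)) := card_biUnion_le
    _ ≤ _ := sum_le_sum fun i _ => by
        rw [card_powersetCard, card_univ]
        exact Nat.choose_le_pow _ _

theorem cobipartite_numMinRDF_upper_general (α : ℝ) (hroot : α ^ 3 = α ^ 2 + 1) :
    ∃ p : Polynomial ℝ, ∀ (V : Type) [Fintype V] (G : SimpleGraph V),
      (∃ C₁ C₂ : Set V, C₁ ∪ C₂ = Set.univ ∧ Disjoint C₁ C₂ ∧
        G.IsClique C₁ ∧ G.IsClique C₂) →
      (numMinRDF G : ℝ) ≤ p.eval (Fintype.card V : ℝ) * α ^ (Fintype.card V) := by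
  classical
  refine ⟨.X ^ 2 + .X + 3, fun V _ G ⟨C₁, C₂, hcover, hdisj, hC₁, hC₂⟩ => ?_⟩
  set n := Fintype.card V
  set A := C₁.toFinset
  have hA : G.IsClique (A : Set V) := by simpa [A] using hC₁
  have hAc : G.IsClique (↑Aᶜ : Set V) := by
    rwa [coe_compl, Set.coe_toFinset, (isCompl_iff.2 ⟨hdisj, codisjoint_iff.2 hcover⟩).compl_eq]
  have hn : #A + #Aᶜ = n := card_add_card_compl A
  have h₁ := card_privateFamily_le hroot A Aᶜ (G.neighborFinset ·)
  have h₂ := card_privateFamily_le hroot Aᶜ A (G.neighborFinset ·)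
  rw [hn] at h₁
  rw [add_comm, hn] at h₂
  have hsmall : (#{T : Finset V | #T ≤ 2} : ℝ) ≤ 1 + n + n ^ 2 := by
    exact_mod_cast (card_filter_card_le_sum_pow V 2).trans_eq (by simp [sum_range_succ, n])
  have hpow : 1 ≤ α ^ n := one_le_pow₀ (one_lt_of_pow_three_eq hroot).le
  calc (numMinRDF G : ℝ) ≤ α ^ n + α ^ n + (1 + n + n ^ 2) := by
        have := Nat.cast_le (α := ℝ) |>.2 (numMinRDF_le_of_isClique hA hAc)
        push_cast at this
        linarith
    _ ≤ (n ^ 2 + n + 3) * α ^ n := by nlinarith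
    _ = _ := by simp

/-- Let `α` be the (unique) real root of `x³ = x² + 1` (with `1.46 < α < 1.47`). There is a
polynomial `p` such that every cobipartite graph of order `n` has at most `p(n) · αⁿ`
minimal Roman dominating functions. -/
theorem cobipartite_numMinRDF_upper (α : ℝ) (hroot : α ^ 3 = α ^ 2 + 1)
    (hlo : 1.46 < α) (hhi : α < 1.47) :
    ∃ p : Polynomial ℝ, ∀ (V : Type) [Fintype V] (G : SimpleGraph V),
      (∃ C₁ C₂ : Set V, C₁ ∪ C₂ = Set.univ ∧ Disjoint C₁ C₂ ∧
        G.IsClique C₁ ∧ G.IsClique C₂) →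
      (numMinRDF G : ℝ) ≤ p.eval (Fintype.card V : ℝ) * α ^ (Fintype.card V) :=
  cobipartite_numMinRDF_upper_general α hroot
end
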